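/- If X is a Banach space, then the ℓ²-sum l₂(X) is finitely representable in every subspace of l₂(X) of finite codimension. -/

import Mathlib

open scoped ENNReal
open Finset

noncomputable section
set_option linter.unusedSectionVars false
set_option maxHeartbeats 1000000
set_option synthInstance.maxHeartbeats 1000000

namespace L2FR

variable {X : Type*} [NormedAddCommGroup X] [NormedSpace ℝ X]

local notation "Z" => lp (fun _ : ℕ => X) 2

lemma memℓp_of_eventually_zero {f : ∀ _ : ℕ, X} {N : ℕ}
    (h : ∀ i, N ≤ i → f i = 0) : Memℓp f 2 := by
  apply memℓp_gen
  apply summable_of_ne_finset_zero (s := Finset.range N)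
  intro i hi
  rw [h i (by simpa using hi)]
  simp

lemma norm_sq_eq (f : Z) : ‖f‖ ^ 2 = ∑' i, ‖f i‖ ^ 2 := by
  have h := lp.norm_rpow_eq_tsum (p := 2) (by norm_num) f
  have e : ∀ x : ℝ, x ^ ((2:ℝ≥0∞)).toReal = x ^ 2 := by
    intro x
    rw [ENNReal.toReal_ofNat, show ((2:ℝ):ℝ) = ((2:ℕ):ℝ) by norm_num, Real.rpow_natCast]
  rw [e] at h
  rw [h]
  exact tsum_congr fun i => e _

lemma norm_sq_eq_sum {f : Z} {K : ℕ} (h : ∀ i, K ≤ i → f i = 0) :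
    ‖f‖ ^ 2 = ∑ i ∈ range K, ‖f i‖ ^ 2 := by
  rw [norm_sq_eq]
  exact tsum_eq_sum (by intro i hi; rw [h i (by simpa using hi)]; simp)

/-- Truncation to the first `N` coordinates, as a linear map on `l₂(X)`. -/
def PN (N : ℕ) : Z →ₗ[ℝ] Z where
  toFun f := ⟨fun i => if i < N then f i else 0,
    memℓp_of_eventually_zero (N := N) (fun i hi => by simp [Nat.not_lt.2 hi])⟩
  map_add' f g := by
    ext i
    simp only [lp.coeFn_add, Pi.add_apply]
    by_cases h : i < N <;> simp [h]
  map_smul' t f := by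
    ext i
    simp only [lp.coeFn_smul, Pi.smul_apply, RingHom.id_apply]
    by_cases h : i < N <;> simp [h]

@[simp] lemma PN_apply (N : ℕ) (f : Z) (i : ℕ) :
    (PN N f : ∀ _ : ℕ, X) i = if i < N then f i else 0 := rfl

/-- The "block" map: copies the first `N` coordinates into the window `[k, k+N)`. -/
def W (k N : ℕ) : Z →ₗ[ℝ] Z where
  toFun f := ⟨fun i => if k ≤ i ∧ i < k + N then f (i - k) else 0,
    memℓp_of_eventually_zero (N := k + N) (fun i hi => by simp [Nat.not_lt.2 hi])⟩
  map_add' f g := by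
    ext i
    simp only [lp.coeFn_add, Pi.add_apply]
    by_cases h : k ≤ i ∧ i < k + N <;> simp [h]
  map_smul' t f := by
    ext i
    simp only [lp.coeFn_smul, Pi.smul_apply, RingHom.id_apply]
    by_cases h : k ≤ i ∧ i < k + N <;> simp [h]

@[simp] lemma W_apply (k N : ℕ) (f : Z) (i : ℕ) :
    (W k N f : ∀ _ : ℕ, X) i = if k ≤ i ∧ i < k + N then f (i - k) else 0 := rfl


section Block

variable {M N : ℕ}

/-- extension of `c` by zero -/
def cExt {M : ℕ} (c : Fin M → ℝ) : ℕ → ℝ := fun j => if h : j < M then c ⟨j, h⟩ else 0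

lemma block_coord_zero (c : Fin M → ℝ) (f : Z) (i : ℕ) (hi : M * N ≤ i) :
    (∑ j : Fin M, c j • W ((j : ℕ) * N) N f : Z) i = 0 := by
  rw [lp.coeFn_sum]
  rw [Finset.sum_apply]
  apply Finset.sum_eq_zero
  intro j _
  rw [lp.coeFn_smul, Pi.smul_apply, W_apply]
  rw [if_neg, smul_zero]
  rintro ⟨h1, h2⟩
  have h3 : ((j : ℕ) + 1) * N ≤ M * N := Nat.mul_le_mul_right N j.isLt
  have h4 : ((j : ℕ) + 1) * N = (j : ℕ) * N + N := by ring
  omega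

lemma Npos_of_lt_mul {M N i : ℕ} (hi : i < M * N) : 0 < N := by
  rcases Nat.eq_zero_or_pos N with h | h
  · subst h; simp at hi
  · exact h

lemma block_coord (c : Fin M → ℝ) (f : Z) (i : ℕ) (hi : i < M * N) :
    (∑ j : Fin M, c j • W ((j : ℕ) * N) N f : Z) i
      = cExt c (i / N) • f (i % N) := by
  have hN : 0 < N := Npos_of_lt_mul hi
  have hdiv : i / N < M := Nat.div_lt_of_lt_mul (by rwa [mul_comm] at hi)
  rw [lp.coeFn_sum, Finset.sum_apply]
  rw [Finset.sum_eq_single (⟨i / N, hdiv⟩ : Fin M)]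
  · rw [lp.coeFn_smul, Pi.smul_apply, W_apply]
    simp only [Fin.val_mk]
    have hmod : i % N + i / N * N = i := Nat.mod_add_div' i N
    have hmlt : i % N < N := Nat.mod_lt i hN
    rw [if_pos ⟨by omega, by omega⟩]
    have hsub : i - i / N * N = i % N := by omega
    rw [hsub, cExt, dif_pos hdiv]
  · intro j _ hj
    rw [lp.coeFn_smul, Pi.smul_apply, W_apply]
    rw [if_neg, smul_zero]
    rintro ⟨h1, h2⟩
    apply hj
    apply Fin.ext
    exact ((Nat.div_eq_of_lt_le h1 (by rw [Nat.succ_mul]; exact h2))).symm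
  · intro h
    exact absurd (Finset.mem_univ _) h

lemma block_norm_sq (c : Fin M → ℝ) (f : Z) :
    ‖∑ j : Fin M, c j • W ((j : ℕ) * N) N f‖ ^ 2
      = (∑ j : Fin M, c j ^ 2) * ‖PN N f‖ ^ 2 := by
  rw [norm_sq_eq_sum (K := M * N) (fun i hi => block_coord_zero c f i hi)]
  have h1 : ∀ i ∈ Finset.range (M * N),
      ‖(∑ j : Fin M, c j • W ((j : ℕ) * N) N f : Z) i‖ ^ 2
        = cExt c (i / N) ^ 2 * ‖f (i % N)‖ ^ 2 := by
    intro i hi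
    rw [block_coord c f i (Finset.mem_range.1 hi), norm_smul, mul_pow, Real.norm_eq_abs, sq_abs]
  rw [Finset.sum_congr rfl h1]
  have h2 : ∑ i ∈ Finset.range (M * N), cExt c (i / N) ^ 2 * ‖f (i % N)‖ ^ 2
      = ∑ p ∈ Finset.range M ×ˢ Finset.range N, cExt c p.1 ^ 2 * ‖f p.2‖ ^ 2 := by
    apply Finset.sum_nbij' (i := fun i => (i / N, i % N)) (j := fun p => p.1 * N + p.2)
    · intro i hi
      rw [Finset.mem_range] at hi
      have hN : 0 < N := Npos_of_lt_mul hi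
      rw [Finset.mem_product, Finset.mem_range, Finset.mem_range]
      exact ⟨Nat.div_lt_of_lt_mul (by rwa [mul_comm] at hi), Nat.mod_lt i hN⟩
    · intro p hp
      rw [Finset.mem_product, Finset.mem_range, Finset.mem_range] at hp
      rw [Finset.mem_range]
      have : (p.1 + 1) * N ≤ M * N := Nat.mul_le_mul_right N hp.1
      have h4 : (p.1 + 1) * N = p.1 * N + N := by ring
      omega
    · intro i hi
      show i / N * N + i % N = i
      have h := Nat.div_add_mod i N
      rw [Nat.mul_comm] at h
      exact h
    · intro p hp
      rw [Finset.mem_product, Finset.mem_range, Finset.mem_range] at hp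
      have hd : (p.1 * N + p.2) / N = p.1 := by
        rw [add_comm, Nat.add_mul_div_right _ _ (by omega : 0 < N), Nat.div_eq_of_lt hp.2]
        omega
      have hm : (p.1 * N + p.2) % N = p.2 := by
        rw [add_comm, Nat.add_mul_mod_self_right, Nat.mod_eq_of_lt hp.2]
      rw [hd, hm]
    · intro i hi
      rfl
  rw [h2, Finset.sum_product]
  have h3 : ‖PN N f‖ ^ 2 = ∑ r ∈ Finset.range N, ‖f r‖ ^ 2 := by
    rw [norm_sq_eq_sum (K := N) (fun i hi => by rw [PN_apply, if_neg (Nat.not_lt.2 hi)])]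
    apply Finset.sum_congr rfl
    intro r hr
    rw [PN_apply, if_pos (Finset.mem_range.1 hr)]
  rw [h3]
  have h4 : ∀ x ∈ Finset.range M,
      ∑ y ∈ Finset.range N, cExt c (x, y).1 ^ 2 * ‖f (x, y).2‖ ^ 2
        = cExt c x ^ 2 * ∑ r ∈ Finset.range N, ‖f r‖ ^ 2 := by
    intro x _
    rw [show (∑ y ∈ Finset.range N, cExt c (x, y).1 ^ 2 * ‖f (x, y).2‖ ^ 2)
        = ∑ y ∈ Finset.range N, cExt c x ^ 2 * ‖f y‖ ^ 2 from
      Finset.sum_congr rfl fun y _ => rfl]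
    rw [← Finset.mul_sum]
  rw [Finset.sum_congr rfl h4, ← Finset.sum_mul]
  congr 1
  rw [← Fin.sum_univ_eq_sum_range (fun j => cExt c j ^ 2) M]
  apply Finset.sum_congr rfl
  intro j _
  rw [cExt, dif_pos j.isLt]


end Block

lemma summable_norm_sq (f : Z) : Summable (fun i => ‖f i‖ ^ 2) := by
  have h := (lp.memℓp f).summable (p := 2) (by norm_num)
  have e : ∀ x : ℝ, x ^ ((2:ℝ≥0∞)).toReal = x ^ 2 := by
    intro x
    rw [ENNReal.toReal_ofNat, show ((2:ℝ):ℝ) = ((2:ℕ):ℝ) by norm_num, Real.rpow_natCast]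
  simpa [e] using h

lemma PN_norm_le (N : ℕ) (f : Z) : ‖PN N f‖ ≤ ‖f‖ := by
  have h1 : ‖PN N f‖ ^ 2 ≤ ‖f‖ ^ 2 := by
    rw [norm_sq_eq_sum (f := PN N f) (K := N)
      (fun i hi => by rw [PN_apply, if_neg (Nat.not_lt.2 hi)]), norm_sq_eq f]
    calc ∑ i ∈ range N, ‖(PN N f) i‖ ^ 2 = ∑ i ∈ range N, ‖f i‖ ^ 2 := by
          apply Finset.sum_congr rfl
          intro i hi
          rw [PN_apply, if_pos (Finset.mem_range.1 hi)]
      _ ≤ ∑' i, ‖f i‖ ^ 2 :=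
          Summable.sum_le_tsum _ (fun i _ => by positivity) (summable_norm_sq f)
  calc ‖PN N f‖ = Real.sqrt (‖PN N f‖ ^ 2) := (Real.sqrt_sq (norm_nonneg _)).symm
    _ ≤ Real.sqrt (‖f‖ ^ 2) := Real.sqrt_le_sqrt h1
    _ = ‖f‖ := Real.sqrt_sq (norm_nonneg _)

lemma tail_eventually_small (f : Z) (η : ℝ) (hη : 0 < η) :
    ∀ᶠ N in Filter.atTop, ‖f - PN N f‖ ≤ η := by
  have hg : Summable (fun i => ‖f i‖ ^ 2) := summable_norm_sq f
  have key : ∀ N : ℕ, ‖f - PN N f‖ ^ 2 = (∑' i, ‖f i‖ ^ 2) - ∑ i ∈ range N, ‖f i‖ ^ 2 := by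
    intro N
    have hc : ∀ i, ‖(f - PN N f : Z) i‖ ^ 2 = if i < N then 0 else ‖f i‖ ^ 2 := by
      intro i
      rw [lp.coeFn_sub, Pi.sub_apply, PN_apply]
      by_cases h : i < N <;> simp [h]
    rw [norm_sq_eq (f - PN N f), tsum_congr hc]
    have hinj : Function.Injective (fun j : ℕ => j + N) := add_left_injective N
    have hsupp : Function.support (fun i => if i < N then (0:ℝ) else ‖f i‖ ^ 2)
        ⊆ Set.range (fun j : ℕ => j + N) := by
      intro x hx
      simp only [Function.mem_support] at hx
      by_cases h : x < N
      · simp [h] at hx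
      · exact ⟨x - N, by show x - N + N = x; omega⟩
    have h1 : ∑' j, (if j + N < N then (0:ℝ) else ‖f (j + N)‖ ^ 2)
        = ∑' i, (if i < N then (0:ℝ) else ‖f i‖ ^ 2) := hinj.tsum_eq hsupp
    have h2 : ∀ j : ℕ, (if j + N < N then (0:ℝ) else ‖f (j + N)‖ ^ 2) = ‖f (j + N)‖ ^ 2 := by
      intro j
      rw [if_neg (by omega)]
    rw [← h1, tsum_congr h2]
    have h3 := Summable.sum_add_tsum_nat_add (f := fun i => ‖f i‖ ^ 2) N hg
    linarith
  have htend := hg.hasSum.tendsto_sum_nat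
  rw [Metric.tendsto_atTop] at htend
  obtain ⟨N₀, hN₀⟩ := htend (η ^ 2) (by positivity)
  rw [Filter.eventually_atTop]
  refine ⟨N₀, fun N hN => ?_⟩
  have h4 := hN₀ N hN
  rw [Real.dist_eq, abs_lt] at h4
  have h5 : ‖f - PN N f‖ ^ 2 ≤ η ^ 2 := by
    rw [key N]
    linarith [h4.1]
  calc ‖f - PN N f‖ = Real.sqrt (‖f - PN N f‖ ^ 2) := (Real.sqrt_sq (norm_nonneg _)).symm
    _ ≤ Real.sqrt (η ^ 2) := Real.sqrt_le_sqrt h5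
    _ = η := Real.sqrt_sq hη.le

lemma trunc_approx (A : Submodule ℝ Z) [FiniteDimensional ℝ A] (δ : ℝ) (hδ : 0 < δ) :
    ∃ N : ℕ, 0 < N ∧ ∀ a : A, ‖(a : Z) - PN N a‖ ≤ δ * ‖(a : Z)‖ := by
  classical
  letI : NormedSpace ℝ ↥A := Submodule.normedSpace A
  have b := Module.finBasis ℝ A
  -- coordinate functionals are continuous
  have hcoord : ∀ j, ∃ Cj : ℝ, 0 ≤ Cj ∧ ∀ x : A, |b.repr x j| ≤ Cj * ‖x‖ := by
    intro j
    refine ⟨‖LinearMap.toContinuousLinearMap (b.coord j)‖, ContinuousLinearMap.opNorm_nonneg _, fun x => ?_⟩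
    have h := (LinearMap.toContinuousLinearMap (b.coord j)).le_opNorm x
    simpa [Real.norm_eq_abs, Module.Basis.coord_apply] using h
  choose Cf hCf0 hCf using hcoord
  have hC : 0 ≤ ∑ j, Cf j := Finset.sum_nonneg (fun j _ => hCf0 j)
  have hη : 0 < δ / (∑ j, Cf j + 1) := by positivity
  have hev : ∀ᶠ N in Filter.atTop,
      (0 < N ∧ ∀ j, ‖(b j : Z) - PN N (b j)‖ ≤ δ / (∑ j, Cf j + 1)) := by
    apply Filter.Eventually.and (Filter.eventually_gt_atTop 0)
    rw [Filter.eventually_all]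
    exact fun j => tail_eventually_small _ _ hη
  obtain ⟨N, hN0, hNb⟩ := hev.exists
  refine ⟨N, hN0, fun a => ?_⟩
  have hRdef : ∀ x : A, ((LinearMap.id - (PN N : Z →ₗ[ℝ] Z)) ∘ₗ A.subtype) x
      = (x : Z) - PN N x := by
    intro x
    simp [LinearMap.sub_apply]
  have hrepr : a = ∑ j, b.repr a j • b j := (b.sum_repr a).symm
  have h1 : ((LinearMap.id - (PN N : Z →ₗ[ℝ] Z)) ∘ₗ A.subtype) a
      = ∑ j, b.repr a j • ((LinearMap.id - (PN N : Z →ₗ[ℝ] Z)) ∘ₗ A.subtype) (b j) := by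
    conv_lhs => rw [hrepr]
    rw [map_sum]
    apply Finset.sum_congr rfl
    intro j _
    rw [map_smul]
  have h2 : ‖(a : Z) - PN N a‖ ≤ ∑ j, |b.repr a j| * (δ / (∑ j, Cf j + 1)) := by
    rw [← hRdef a, h1]
    calc ‖∑ j, b.repr a j • ((LinearMap.id - (PN N : Z →ₗ[ℝ] Z)) ∘ₗ A.subtype) (b j)‖
        ≤ ∑ j, ‖b.repr a j • ((LinearMap.id - (PN N : Z →ₗ[ℝ] Z)) ∘ₗ A.subtype) (b j)‖ :=
          norm_sum_le _ _
      _ ≤ ∑ j, |b.repr a j| * (δ / (∑ j, Cf j + 1)) := by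
          apply Finset.sum_le_sum
          intro j _
          rw [norm_smul, Real.norm_eq_abs, hRdef (b j)]
          exact mul_le_mul_of_nonneg_left (hNb j) (abs_nonneg _)
  have h4 : ∑ j, |b.repr a j| * (δ / (∑ j, Cf j + 1))
      ≤ ((∑ j, Cf j) * ‖a‖) * (δ / (∑ j, Cf j + 1)) := by
    rw [← Finset.sum_mul]
    apply mul_le_mul_of_nonneg_right _ hη.le
    calc ∑ j, |b.repr a j| ≤ ∑ j, Cf j * ‖a‖ := Finset.sum_le_sum (fun j _ => hCf j a)
      _ = (∑ j, Cf j) * ‖a‖ := by rw [Finset.sum_mul]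
  have hnc : ‖a‖ = ‖(a : Z)‖ := rfl
  have h5 : ((∑ j, Cf j) * ‖a‖) * (δ / (∑ j, Cf j + 1)) ≤ δ * ‖(a : Z)‖ := by
    rw [← hnc]
    have h7 : (∑ j, Cf j) / (∑ j, Cf j + 1) ≤ 1 := by
      rw [div_le_one (by linarith)]
      linarith
    have h8 : ((∑ j, Cf j) * ‖a‖) * (δ / (∑ j, Cf j + 1))
        = ((∑ j, Cf j) / (∑ j, Cf j + 1)) * (δ * ‖a‖) := by ring
    rw [h8]
    have hq0 : 0 ≤ (∑ j, Cf j) / (∑ j, Cf j + 1) := div_nonneg hC (by linarith)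
    have hda : 0 ≤ δ * ‖a‖ := mul_nonneg hδ.le (norm_nonneg a)
    have := mul_le_mul_of_nonneg_right h7 hda
    linarith
  linarith

end L2FR


/-- `X` is finitely representable in `Y`. -/
def FinRep (X Y : Type*) [SeminormedAddCommGroup X] [NormedSpace ℝ X]
    [SeminormedAddCommGroup Y] [NormedSpace ℝ Y] : Prop :=
  ∀ ε : ℝ, 0 < ε → ∀ A : Submodule ℝ X, FiniteDimensional ℝ A →
    ∃ B : Submodule ℝ Y, ∃ u : A ≃L[ℝ] B,
      ‖(u : A →L[ℝ] B)‖ * ‖(u.symm : B →L[ℝ] A)‖ ≤ 1 + ε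

/-- `l₂(X)` is finitely representable in every subspace of `l₂(X)` of finite
codimension. -/
theorem l2_sum_finRep_in_finite_codim_subspace
    (X : Type*) [NormedAddCommGroup X] [NormedSpace ℝ X] [CompleteSpace X]
    (Y : Submodule ℝ (lp (fun _ : ℕ => X) 2))
    (hcodim : FiniteDimensional ℝ ((lp (fun _ : ℕ => X) 2) ⧸ Y)) :
    FinRep (lp (fun _ : ℕ => X) 2) Y := by
  classical
  intro ε hε A hA
  haveI := hcodim
  haveI := hA
  letI : NormedSpace ℝ ↥A := Submodule.normedSpace A
  letI : NormedSpace ℝ ↥Y := Submodule.normedSpace Y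
  have hε1 : (0:ℝ) < 1 + ε := by linarith
  have hδ0 : 0 < ε / (1 + ε) := by positivity
  have hδ1 : ε / (1 + ε) < 1 := by rw [div_lt_one hε1]; linarith
  have h1δ : 1 - ε / (1 + ε) = (1 + ε)⁻¹ := by field_simp; ring
  obtain ⟨N, hN0, htr⟩ := L2FR.trunc_approx A (ε / (1 + ε)) hδ0
  -- the linear dependence over the finite-dimensional quotient
  have hdep : ¬ LinearIndependent ℝ
      (fun j : Fin (Module.finrank ℝ
          (↥A →ₗ[ℝ] ((lp (fun _ : ℕ => X) 2) ⧸ Y)) + 1) =>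
        Y.mkQ.comp ((L2FR.W ((j : ℕ) * N) N).comp A.subtype)) := by
    intro hli
    have hcard := hli.fintype_card_le_finrank
    rw [Fintype.card_fin] at hcard
    omega
  obtain ⟨c, hcsum, j₀, hcj₀⟩ := Fintype.not_linearIndependent_iff.1 hdep
  -- the map `w`
  have hwa : ∀ a : A,
      (∑ j, c j • ((L2FR.W ((j : ℕ) * N) N).comp A.subtype)) a
        = ∑ j, c j • L2FR.W ((j : ℕ) * N) N (a : lp (fun _ : ℕ => X) 2) := by
    intro a
    rw [LinearMap.sum_apply]
    apply Finset.sum_congr rfl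
    intro j _
    rw [LinearMap.smul_apply]
    rfl
  have hwY : ∀ a : A, (∑ j, c j • ((L2FR.W ((j : ℕ) * N) N).comp A.subtype)) a ∈ Y := by
    intro a
    have h0 : (∑ j, c j • (Y.mkQ.comp ((L2FR.W ((j : ℕ) * N) N).comp A.subtype))) a = 0 := by
      rw [hcsum]
      rfl
    rw [LinearMap.sum_apply] at h0
    have h1 : Y.mkQ ((∑ j, c j • ((L2FR.W ((j : ℕ) * N) N).comp A.subtype)) a) = 0 := by
      rw [hwa a, map_sum, ← h0]
      apply Finset.sum_congr rfl
      intro j _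
      rw [LinearMap.smul_apply, map_smul]
      rfl
    rwa [Submodule.mkQ_apply, Submodule.Quotient.mk_eq_zero] at h1
  have hsum0 : 0 < ∑ j, c j ^ 2 := by
    apply Finset.sum_pos' (fun j _ => sq_nonneg _)
    refine ⟨j₀, Finset.mem_univ _, ?_⟩
    have h1 : c j₀ ^ 2 ≠ 0 := pow_ne_zero 2 hcj₀
    exact lt_of_le_of_ne (sq_nonneg _) (Ne.symm h1)
  have hs0 : 0 < Real.sqrt (∑ j, c j ^ 2) := Real.sqrt_pos.2 hsum0
  have hwn : ∀ a : A, ‖(∑ j, c j • ((L2FR.W ((j : ℕ) * N) N).comp A.subtype)) a‖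
      = Real.sqrt (∑ j, c j ^ 2) * ‖L2FR.PN N (a : lp (fun _ : ℕ => X) 2)‖ := by
    intro a
    have h1 : ‖(∑ j, c j • ((L2FR.W ((j : ℕ) * N) N).comp A.subtype)) a‖ ^ 2
        = (∑ j, c j ^ 2) * ‖L2FR.PN N (a : lp (fun _ : ℕ => X) 2)‖ ^ 2 := by
      rw [hwa a]
      exact L2FR.block_norm_sq c _
    have h2 : ‖(∑ j, c j • ((L2FR.W ((j : ℕ) * N) N).comp A.subtype)) a‖
        = Real.sqrt (‖(∑ j, c j • ((L2FR.W ((j : ℕ) * N) N).comp A.subtype)) a‖ ^ 2) :=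
      (Real.sqrt_sq (norm_nonneg _)).symm
    rw [h2, h1, Real.sqrt_mul hsum0.le, Real.sqrt_sq (norm_nonneg _)]
  -- normalized map into Y
  have hw2Y : ∀ a : A, ((Real.sqrt (∑ j, c j ^ 2))⁻¹ •
      (∑ j, c j • ((L2FR.W ((j : ℕ) * N) N).comp A.subtype))) a ∈ Y := by
    intro a
    rw [LinearMap.smul_apply]
    exact Y.smul_mem _ (hwY a)
  set w' : ↥A →ₗ[ℝ] ↥Y := LinearMap.codRestrict Y _ hw2Y with hw'def
  have hw'n : ∀ a : A, ‖w' a‖ = ‖L2FR.PN N (a : lp (fun _ : ℕ => X) 2)‖ := by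
    intro a
    have h1 : ‖w' a‖ = ‖((Real.sqrt (∑ j, c j ^ 2))⁻¹ •
        (∑ j, c j • ((L2FR.W ((j : ℕ) * N) N).comp A.subtype))) a‖ := rfl
    rw [h1, LinearMap.smul_apply, norm_smul, Real.norm_eq_abs,
      abs_of_pos (inv_pos.2 hs0), hwn a, ← mul_assoc,
      inv_mul_cancel₀ (ne_of_gt hs0), one_mul]
  have hub : ∀ a : A, ‖w' a‖ ≤ ‖a‖ := by
    intro a
    rw [hw'n a]
    exact L2FR.PN_norm_le N _
  have hlb : ∀ a : A, (1 - ε / (1 + ε)) * ‖a‖ ≤ ‖w' a‖ := by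
    intro a
    rw [hw'n a]
    have h1 : ‖(a : lp (fun _ : ℕ => X) 2)‖ - ‖L2FR.PN N (a : lp (fun _ : ℕ => X) 2)‖
        ≤ ‖(a : lp (fun _ : ℕ => X) 2) - L2FR.PN N (a : lp (fun _ : ℕ => X) 2)‖ :=
      norm_sub_norm_le _ _
    have h2 := htr a
    have h3 : ‖a‖ = ‖(a : lp (fun _ : ℕ => X) 2)‖ := rfl
    rw [h3]
    nlinarith [norm_nonneg (a : lp (fun _ : ℕ => X) 2)]
  have hinj : Function.Injective w' := by
    apply LinearMap.ker_eq_bot.1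
    apply LinearMap.ker_eq_bot'.2
    intro a h0
    have h2 := hlb a
    rw [h0, norm_zero] at h2
    have h4 : 0 < 1 - ε / (1 + ε) := by linarith
    have h5 : ‖a‖ ≤ 0 := by nlinarith [norm_nonneg a]
    have h6 : ‖a‖ = 0 := le_antisymm h5 (norm_nonneg a)
    exact norm_eq_zero.1 h6
  refine ⟨LinearMap.range w', ?_⟩
  letI : NormedSpace ℝ ↥(LinearMap.range w') := Submodule.normedSpace _
  set e : ↥A ≃ₗ[ℝ] ↥(LinearMap.range w') := LinearEquiv.ofInjective w' hinj with hedef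
  refine ⟨e.toContinuousLinearEquiv, ?_⟩
  set u : ↥A ≃L[ℝ] ↥(LinearMap.range w') := e.toContinuousLinearEquiv with hudef
  have hcoe : ∀ a : A, ((u a : ↥(LinearMap.range w')) : ↥Y) = w' a := by
    intro a
    have h1 : u a = e a := by
      rw [hudef]
      rfl
    rw [h1]
    exact LinearEquiv.ofInjective_apply w' a
  have hnu : ‖(u : ↥A →L[ℝ] ↥(LinearMap.range w'))‖ ≤ 1 := by
    apply ContinuousLinearMap.opNorm_le_bound (𝕜 := ℝ) (𝕜₂ := ℝ) (E := ↥A) (F := ↥(LinearMap.range w')) _ zero_le_one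
    intro a
    have h1 : ‖(u : ↥A →L[ℝ] ↥(LinearMap.range w')) a‖ = ‖((u a : ↥(LinearMap.range w')) : ↥Y)‖ := rfl
    rw [h1, hcoe a, one_mul]
    exact hub a
  have hnus : ‖(u.symm : ↥(LinearMap.range w') →L[ℝ] ↥A)‖ ≤ 1 + ε := by
    apply ContinuousLinearMap.opNorm_le_bound (𝕜 := ℝ) (𝕜₂ := ℝ) (E := ↥(LinearMap.range w')) (F := ↥A) _ (by linarith)
    intro bb
    have h1 : ‖(u.symm : ↥(LinearMap.range w') →L[ℝ] ↥A) bb‖ = ‖u.symm bb‖ := rfl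
    rw [h1]
    have h2 : ‖bb‖ = ‖w' (u.symm bb)‖ := by
      rw [← hcoe (u.symm bb), u.apply_symm_apply bb]
      rfl
    have h3 := hlb (u.symm bb)
    rw [h1δ] at h3
    have h4 := mul_le_mul_of_nonneg_left h3 hε1.le
    rw [← mul_assoc, mul_inv_cancel₀ (ne_of_gt hε1), one_mul] at h4
    rw [h2]
    linarith
  calc ‖(u : ↥A →L[ℝ] ↥(LinearMap.range w'))‖ * ‖(u.symm : ↥(LinearMap.range w') →L[ℝ] ↥A)‖
      ≤ 1 * (1 + ε) := mul_le_mul hnu hnus (ContinuousLinearMap.opNorm_nonneg (𝕜 := ℝ) (𝕜₂ := ℝ) (E := ↥(LinearMap.range w')) (F := ↥A) _) zero_le_one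
    _ = 1 + ε := one_mul _
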